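/- Let m ≥ 1, let f ∈ L¹(ℝ^m, ℂ), let ψ : ℝ → ℂ be (essentially) bounded and measurable, and fix a unit vector u ∈ ℝ^m, α > 0 and β ∈ ℝ. Then: (i) for almost every p ∈ ℝ the function y ↦ f(p·u + y) is integrable on the orthogonal complement (ℝu)^⊥ (equipped with its Lebesgue measure), so the Radon transform Rf(u,p) = ∫_{(ℝu)^⊥} f(p·u + y) dy is defined for a.e. p and is integrable in p; and (ii) the ridgelet transform factors through the Radon transform: ∫_{ℝ^m} f(x) · conj(ψ((⟨u,x⟩ − β)/α)) · α^{−1} dx = ∫_ℝ Rf(u,p) · conj(ψ((p − β)/α)) · α^{−1} dp. -/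

import Mathlib

open MeasureTheory
open scoped RealInnerProductSpace ENNReal

/-!
The map `(p, y) ↦ p • u + y` from `ℝ × (ℝ ∙ u)ᗮ` to `E` becomes a linear isometry once the product
carries the `L²` norm, so it pushes the product of the Lebesgue measures to Lebesgue measure on `E`.
Since `⟪u, p • u + y⟫ = p`, both claims are Fubini's theorem in these coordinates, the ridgelet
kernel being an essentially bounded function of `p` alone.
-/

theorem MeasureTheory.MemLp.comp_quasiMeasurePreserving_top {α β F : Type*}
    [MeasurableSpace α] [MeasurableSpace β] [NormedAddCommGroup F]
    {μ : Measure α} {ν : Measure β} {g : β → F} {f : α → β}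
    (hg : MemLp g ∞ ν) (hf : Measure.QuasiMeasurePreserving f μ ν) : MemLp (g ∘ f) ∞ μ := by
  refine .comp_of_map ⟨hg.1.mono_ac hf.absolutelyContinuous, ?_⟩ hf.aemeasurable
  rw [eLpNorm_exponent_top] at *
  exact (eLpNormEssSup_mono_measure g hf.absolutelyContinuous).trans_lt hg.2

theorem Real.quasiMeasurePreserving_sub_div (β : ℝ) {α : ℝ} (hα : α ≠ 0) :
    Measure.QuasiMeasurePreserving (fun p : ℝ => (p - β) / α) := by
  have := (Measure.quasiMeasurePreserving_smul volume (inv_ne_zero hα)).comp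
    (measurePreserving_sub_right volume β).quasiMeasurePreserving
  simpa only [Function.comp_def, smul_eq_mul, inv_mul_eq_div] using this

section

variable {E : Type*} [NormedAddCommGroup E] [InnerProductSpace ℝ E]

noncomputable def smulAddOrthogonalEquiv (u : E) (hu : ‖u‖ = 1) : (ℝ × (ℝ ∙ u)ᗮ) ≃L[ℝ] E :=
  ((LinearIsometryEquiv.toSpanUnitSingleton u hu).toContinuousLinearEquiv.prodCongr
    (.refl ℝ _)).trans <|
  (WithLp.prodContinuousLinearEquiv 2 ℝ _ _).symm.trans
    (ℝ ∙ u).orthogonalDecomposition.symm.toContinuousLinearEquiv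

@[simp]
theorem smulAddOrthogonalEquiv_apply (u : E) (hu : ‖u‖ = 1) (q : ℝ × (ℝ ∙ u)ᗮ) :
    smulAddOrthogonalEquiv u hu q = q.1 • u + q.2 := by
  simp [smulAddOrthogonalEquiv]

theorem inner_smul_add_orthogonal {u : E} (hu : ‖u‖ = 1) (p : ℝ) (y : (ℝ ∙ u)ᗮ) :
    ⟪u, p • u + y⟫ = p := by
  rw [inner_add_right, real_inner_smul_right, real_inner_self_eq_norm_sq, hu,
    Submodule.mem_orthogonal_singleton_iff_inner_right.1 y.2]
  ring

variable [MeasurableSpace E] [BorelSpace E] [FiniteDimensional ℝ E]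

theorem measurePreserving_smulAddOrthogonalEquiv (u : E) (hu : ‖u‖ = 1) :
    MeasurePreserving (smulAddOrthogonalEquiv u hu) :=
  ((ℝ ∙ u).orthogonalDecomposition.symm.measurePreserving.comp
    (WithLp.volume_preserving_toLp _ _)).comp
    ((LinearIsometryEquiv.toSpanUnitSingleton u hu).measurePreserving.prod
      (MeasurePreserving.id volume))

/-- Equal to `0` at the `p` whose slice is not integrable. -/
noncomputable def radonTransform {F : Type*} [NormedAddCommGroup F] [NormedSpace ℝ F]
    (f : E → F) (u : E) (p : ℝ) : F :=
  ∫ y : (ℝ ∙ u)ᗮ, f (p • u + y)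

section

variable {F : Type*} [NormedAddCommGroup F] {f : E → F} {u : E}

theorem MeasureTheory.Integrable.comp_smul_add_orthogonal (hf : Integrable f) (hu : ‖u‖ = 1) :
    Integrable (fun q : ℝ × (ℝ ∙ u)ᗮ => f (q.1 • u + q.2)) := by
  simpa [Function.comp_def] using
    ((measurePreserving_smulAddOrthogonalEquiv u hu).integrable_comp_emb
      (smulAddOrthogonalEquiv u hu).toHomeomorph.measurableEmbedding).2 hf

theorem MeasureTheory.Integrable.ae_integrable_smul_add_orthogonal (hf : Integrable f)
    (hu : ‖u‖ = 1) : ∀ᵐ p : ℝ, Integrable (fun y : (ℝ ∙ u)ᗮ => f (p • u + y)) :=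
  (hf.comp_smul_add_orthogonal hu).prod_right_ae

theorem MeasureTheory.Integrable.radonTransform [NormedSpace ℝ F] (hf : Integrable f)
    (hu : ‖u‖ = 1) : Integrable (radonTransform f u) :=
  (hf.comp_smul_add_orthogonal hu).integral_prod_left

end

theorem integral_mul_inner_eq_integral_radonTransform_mul {𝕜 : Type*} [RCLike 𝕜] {f : E → 𝕜}
    {g : ℝ → 𝕜} {u : E} (hf : Integrable f) (hg : MemLp g ∞) (hu : ‖u‖ = 1) :
    ∫ x, f x * g ⟪u, x⟫ = ∫ p, radonTransform f u p * g p := by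
  have hfg : Integrable (fun q : ℝ × (ℝ ∙ u)ᗮ => f (q.1 • u + q.2) * g q.1) :=
    (hf.comp_smul_add_orthogonal hu).mul_of_top_left
      (hg.comp_quasiMeasurePreserving_top Measure.quasiMeasurePreserving_fst)
  calc ∫ x, f x * g ⟪u, x⟫
      = ∫ q : ℝ × (ℝ ∙ u)ᗮ, f (q.1 • u + q.2) * g q.1 := by
        rw [← (measurePreserving_smulAddOrthogonalEquiv u hu).integral_comp
          (smulAddOrthogonalEquiv u hu).toHomeomorph.measurableEmbedding]
        simp only [smulAddOrthogonalEquiv_apply, inner_smul_add_orthogonal hu]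
    _ = ∫ p, ∫ y : (ℝ ∙ u)ᗮ, f (p • u + y) * g p := integral_prod _ hfg
    _ = ∫ p, radonTransform f u p * g p := by
        simp only [integral_mul_const, radonTransform]

end

theorem stmt3_general (m : ℕ)
    (f : EuclideanSpace ℝ (Fin m) → ℂ) (hf : Integrable f)
    (ψ : ℝ → ℂ) (hψbdd : MemLp ψ ⊤ volume)
    (u : EuclideanSpace ℝ (Fin m)) (hu : ‖u‖ = 1) (α : ℝ) (hα : 0 < α) (β : ℝ) :
    (∀ᵐ p : ℝ, Integrable (fun y : ((ℝ ∙ u)ᗮ : Submodule ℝ (EuclideanSpace ℝ (Fin m))) =>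
        f (p • u + (y : EuclideanSpace ℝ (Fin m))))) ∧
    Integrable (fun p : ℝ =>
      ∫ y : ((ℝ ∙ u)ᗮ : Submodule ℝ (EuclideanSpace ℝ (Fin m))),
        f (p • u + (y : EuclideanSpace ℝ (Fin m)))) ∧
    ∫ x : EuclideanSpace ℝ (Fin m),
        f x * (starRingEnd ℂ) (ψ ((⟪u, x⟫ - β) / α)) * ((α⁻¹ : ℝ) : ℂ)
      = ∫ p : ℝ,
          (∫ y : ((ℝ ∙ u)ᗮ : Submodule ℝ (EuclideanSpace ℝ (Fin m))),
            f (p • u + (y : EuclideanSpace ℝ (Fin m))))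
            * (starRingEnd ℂ) (ψ ((p - β) / α)) * ((α⁻¹ : ℝ) : ℂ) := by
  have hg : MemLp (fun p : ℝ => starRingEnd ℂ (ψ ((p - β) / α)) * ((α⁻¹ : ℝ) : ℂ)) ⊤ :=
    (hψbdd.comp_quasiMeasurePreserving_top
      (Real.quasiMeasurePreserving_sub_div β hα.ne')).star.mul_const _
  refine ⟨hf.ae_integrable_smul_add_orthogonal hu, hf.radonTransform hu, ?_⟩
  simpa only [mul_assoc, radonTransform] using
    integral_mul_inner_eq_integral_radonTransform_mul hf hg hu

/-- For `f ∈ L¹(ℝ^m)`, `ψ` essentially bounded measurable, a unit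
vector `u`, `α > 0` and `β ∈ ℝ`: (i) for a.e. `p` the slice `y ↦ f(p·u + y)` is
integrable on `(ℝu)^⊥` (with its canonical Lebesgue measure), the Radon transform
`Rf(u,p)` is integrable in `p`; and (ii) the ridgelet transform factors through the
Radon transform. -/
theorem stmt3 (m : ℕ) (hm : 1 ≤ m)
    (f : EuclideanSpace ℝ (Fin m) → ℂ) (hf : Integrable f)
    (ψ : ℝ → ℂ) (hψmeas : AEStronglyMeasurable ψ volume) (hψbdd : MemLp ψ ⊤ volume)
    (u : EuclideanSpace ℝ (Fin m)) (hu : ‖u‖ = 1) (α : ℝ) (hα : 0 < α) (β : ℝ) :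
    (∀ᵐ p : ℝ, Integrable (fun y : ((ℝ ∙ u)ᗮ : Submodule ℝ (EuclideanSpace ℝ (Fin m))) =>
        f (p • u + (y : EuclideanSpace ℝ (Fin m))))) ∧
    Integrable (fun p : ℝ =>
      ∫ y : ((ℝ ∙ u)ᗮ : Submodule ℝ (EuclideanSpace ℝ (Fin m))),
        f (p • u + (y : EuclideanSpace ℝ (Fin m)))) ∧
    ∫ x : EuclideanSpace ℝ (Fin m),
        f x * (starRingEnd ℂ) (ψ ((⟪u, x⟫ - β) / α)) * ((α⁻¹ : ℝ) : ℂ)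
      = ∫ p : ℝ,
          (∫ y : ((ℝ ∙ u)ᗮ : Submodule ℝ (EuclideanSpace ℝ (Fin m))),
            f (p • u + (y : EuclideanSpace ℝ (Fin m))))
            * (starRingEnd ℂ) (ψ ((p - β) / α)) * ((α⁻¹ : ℝ) : ℂ) :=
  stmt3_general m f hf ψ hψbdd u hu α hα β
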